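/- arXiv:1408.6824 — 2 statements merged into one kernel-verified Lean document; each statement's English description precedes it below -/
import Mathlib

section
/- Let 𝒳 be a finite field with q elements (q a prime power), let 𝒴₁,…,𝒴_K be finite sets, and let (X,Y₁,…,Y_K) be a random vector with joint distribution P on 𝒳×𝒴₁×⋯×𝒴_K. For every ε>0 and δ>0 there exist positive integers t and m₀ such that for every integer m ≥ m₀, setting n = t·2^m, there exist a positive integer M, an encoder f : 𝒳ⁿ → Fin M, and decoders g_k : Fin M × 𝒴_kⁿ → 𝒳ⁿ for 1 ≤ k ≤ K, such that the rate R = (log M)/(n·log q) satisfies max_{1≤k≤K} H_q(X|Y_k) < R < max_{1≤k≤K} H_q(X|Y_k) + δ, and for every 1 ≤ k ≤ K the error probability Pr[X^{1:n} ≠ g_k(f(X^{1:n}), Y_k^{1:n})] < ε, where (X^{1:n}, Y₁^{1:n}, …, Y_K^{1:n}) denotes n i.i.d. copies of (X,Y₁,…,Y_K) (i.e., the n-fold product of P). -/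
open scoped BigOperators

/-- Shannon entropy (in nats) of a probability mass function on a finite type. -/
noncomputable def pmfEntropy {α : Type} [Fintype α] (Q : PMF α) : ℝ :=
  ∑ a, Real.negMulLog ((Q a).toReal)

open Classical in
/-- Probability of the event `E` under `n` i.i.d. copies of a distribution `P`
on a finite alphabet. -/
noncomputable def iidProb {α : Type} [Fintype α] (P : PMF α) (n : ℕ)
    (E : (Fin n → α) → Prop) : ℝ :=
  ∑ ω : Fin n → α, if E ω then ∏ i, (P (ω i)).toReal else 0

/-- Conditional entropy `H_q(X | Y_k)` (in base `q = |𝓧|`), computed as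
`(H(X, Y_k) - H(Y_k)) / log q` from the joint distribution `P` of
`(X, Y_1, …, Y_K)`. -/
noncomputable def condEntropyQ {𝓧 : Type} [Fintype 𝓧] {K : ℕ} {𝓨 : Fin K → Type}
    [∀ k, Fintype (𝓨 k)] (P : PMF (𝓧 × ∀ k, 𝓨 k)) (k : Fin K) : ℝ :=
  (pmfEntropy (P.map fun p => (p.1, p.2 k)) - pmfEntropy (P.map fun p => p.2 k)) /
    Real.log (Fintype.card 𝓧)

/-!
Random binning with typicality decoding. The encoder sends the bin `f x ∈ Fin M` of the source
word `x`; decoder `k` returns a word of that bin whose conditional probability given its side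
information `y` is at least `e^{-c}`, where `c ≈ n (H(X|Y_k) + γ)` in nats. Decoding can fail only
if the true word is atypical, which has probability `O(1/n)` by Chebyshev's inequality applied to
the i.i.d. information densities `-log P(x_i | y_i)`, or if another typical word shares its bin.
At most `e^c` words are typical given `y`, so a uniformly random binning produces such a collision
with probability at most `e^c / M` for each decoder; averaging the sum over the `K` decoders gives a
single binning that is good for all of them as soon as `log M ≈ n (max_k H(X|Y_k) + δ/2)`. Block
lengths `n = 2^m` (so `t = 1`) suffice.
-/

namespace SourceCoding

open Finset Real Filter Topology

section Iid

variable {α : Type} [Fintype α] (P : PMF α)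

lemma sum_toReal_apply_eq_one : ∑ a, (P a).toReal = 1 := by
  rw [← ENNReal.toReal_sum fun a _ => P.apply_ne_top a,
    ← tsum_fintype (L := SummationFilter.unconditional _), P.tsum_coe, ENNReal.toReal_one]

noncomputable def pmfMean (φ : α → ℝ) : ℝ :=
  ∑ a, (P a).toReal * φ a

noncomputable def pmfVar (φ : α → ℝ) : ℝ :=
  pmfMean P fun a => (φ a - pmfMean P φ) ^ 2

lemma pmfMean_const (c : ℝ) : pmfMean P (fun _ => c) = c := by
  rw [pmfMean, ← sum_mul, sum_toReal_apply_eq_one, one_mul]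

lemma pmfMean_sub_const (φ : α → ℝ) (c : ℝ) :
    pmfMean P (fun a => φ a - c) = pmfMean P φ - c := by
  simp only [pmfMean, mul_sub, sum_sub_distrib]
  rw [← pmfMean, ← sum_mul, sum_toReal_apply_eq_one, one_mul]

lemma pmfMean_nonneg {φ : α → ℝ} (hφ : ∀ a, P a ≠ 0 → 0 ≤ φ a) : 0 ≤ pmfMean P φ := by
  refine sum_nonneg fun a _ => ?_
  by_cases ha : P a = 0
  · simp [ha]
  · exact mul_nonneg ENNReal.toReal_nonneg (hφ a ha)

lemma pmfVar_nonneg (φ : α → ℝ) : 0 ≤ pmfVar P φ :=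
  pmfMean_nonneg P fun _ _ => sq_nonneg _

noncomputable def iidExpect (n : ℕ) (F : (Fin n → α) → ℝ) : ℝ :=
  ∑ ω, (∏ i, (P (ω i)).toReal) * F ω

variable {n : ℕ}

open Classical in
lemma iidProb_eq_iidExpect (E : (Fin n → α) → Prop) :
    iidProb P n E = iidExpect P n fun ω => if E ω then 1 else 0 := by
  simp only [iidProb, iidExpect, mul_ite, mul_one, mul_zero]

lemma iidExpect_prod (g : Fin n → α → ℝ) :
    iidExpect P n (fun ω => ∏ i, g i (ω i)) = ∏ i, pmfMean P (g i) := by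
  simp only [iidExpect, pmfMean, ← prod_mul_distrib]
  exact (Fintype.prod_sum fun i a => (P a).toReal * g i a).symm

lemma iidExpect_sum {ι : Type} (s : Finset ι) (F : ι → (Fin n → α) → ℝ) :
    iidExpect P n (fun ω => ∑ j ∈ s, F j ω) = ∑ j ∈ s, iidExpect P n (F j) := by
  simp only [iidExpect, mul_sum]
  exact sum_comm

lemma iidExpect_mul_const (F : (Fin n → α) → ℝ) (c : ℝ) :
    iidExpect P n (fun ω => F ω * c) = iidExpect P n F * c := by
  simp only [iidExpect, ← mul_assoc, sum_mul]

lemma iidExpect_const (c : ℝ) : iidExpect P n (fun _ => c) = c := by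
  have h1 := iidExpect_prod P fun (_ : Fin n) (_ : α) => (1 : ℝ)
  simp only [prod_const_one, pmfMean_const] at h1
  simpa only [one_mul, h1] using iidExpect_mul_const (n := n) P (fun _ => 1) c

lemma iidExpect_mono_of_support {F G : (Fin n → α) → ℝ}
    (h : ∀ ω, (∀ i, P (ω i) ≠ 0) → F ω ≤ G ω) : iidExpect P n F ≤ iidExpect P n G := by
  refine sum_le_sum fun ω _ => ?_
  by_cases hω : ∀ i, P (ω i) ≠ 0
  · exact mul_le_mul_of_nonneg_left (h ω hω) (prod_nonneg fun _ _ => ENNReal.toReal_nonneg)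
  · obtain ⟨i, hi⟩ := not_forall_not.mp hω
    have h0 : ∏ i, (P (ω i)).toReal = 0 := prod_eq_zero (mem_univ i) (by simp [hi])
    simp [h0]

lemma iidExpect_apply (j : Fin n) (ψ : α → ℝ) :
    iidExpect P n (fun ω => ψ (ω j)) = pmfMean P ψ := by
  have h := iidExpect_prod P fun i a => if i = j then ψ a else 1
  have hmean : ∀ i, pmfMean P (fun a => if i = j then ψ a else 1)
      = if i = j then pmfMean P ψ else 1 := fun i => by
    split_ifs
    · rfl
    · exact pmfMean_const P 1
  simpa only [Fintype.prod_ite_eq', hmean] using h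

lemma iidExpect_apply_mul_apply {j j' : Fin n} (hj : j ≠ j') (φ ψ : α → ℝ) :
    iidExpect P n (fun ω => φ (ω j) * ψ (ω j')) = pmfMean P φ * pmfMean P ψ := by
  have h := iidExpect_prod P fun i a => (if i = j then φ a else 1) * (if i = j' then ψ a else 1)
  have hmean : ∀ i, pmfMean P (fun a => (if i = j then φ a else 1) * (if i = j' then ψ a else 1))
      = (if i = j then pmfMean P φ else 1) * (if i = j' then pmfMean P ψ else 1) := fun i => by
    by_cases hi : i = j
    · subst hi; simp [hj]
    · by_cases hi' : i = j'
      · subst hi'; simp [hi]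
      · simpa [hi, hi'] using pmfMean_const P 1
  simpa only [prod_mul_distrib, Fintype.prod_ite_eq', hmean] using h

lemma iidExpect_sum_sq_of_pmfMean_eq_zero {φ : α → ℝ} (hφ : pmfMean P φ = 0) :
    iidExpect P n (fun ω => (∑ j, φ (ω j)) ^ 2) = n * pmfMean P (fun a => φ a ^ 2) := by
  have hpair : ∀ j j' : Fin n, iidExpect P n (fun ω => φ (ω j) * φ (ω j'))
      = if j = j' then pmfMean P (fun a => φ a ^ 2) else 0 := fun j j' => by
    split_ifs with hj
    · subst hj
      simp only [← sq]
      exact iidExpect_apply P j fun a => φ a ^ 2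
    · rw [iidExpect_apply_mul_apply P hj, hφ, zero_mul]
  simp only [sq, sum_mul_sum, iidExpect_sum, hpair, sum_ite_eq, mem_univ, if_true, sum_const,
    card_univ, Fintype.card_fin, nsmul_eq_mul]

lemma iidProb_nonneg (E : (Fin n → α) → Prop) : 0 ≤ iidProb P n E :=
  sum_nonneg fun _ _ => by split_ifs <;> positivity

open Classical in
lemma iidProb_le_iidExpect {E : (Fin n → α) → Prop} {F : (Fin n → α) → ℝ}
    (hF : ∀ ω, 0 ≤ F ω) (hEF : ∀ ω, E ω → 1 ≤ F ω) : iidProb P n E ≤ iidExpect P n F := by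
  rw [iidProb_eq_iidExpect]
  refine iidExpect_mono_of_support P fun ω _ => ?_
  split_ifs with h
  exacts [hEF ω h, hF ω]

open Classical in
lemma iidProb_mono_of_support {E F : (Fin n → α) → Prop}
    (h : ∀ ω, (∀ i, P (ω i) ≠ 0) → E ω → F ω) : iidProb P n E ≤ iidProb P n F := by
  simp only [iidProb_eq_iidExpect]
  refine iidExpect_mono_of_support P fun ω hω => ?_
  by_cases hE : E ω
  · simp [hE, h ω hω hE]
  · simp only [hE, if_false]
    split_ifs <;> norm_num

open Classical in
lemma iidProb_or_le (E F : (Fin n → α) → Prop) :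
    iidProb P n (fun ω => E ω ∨ F ω) ≤ iidProb P n E + iidProb P n F := by
  simp only [iidProb_eq_iidExpect, iidExpect, ← sum_add_distrib, ← mul_add]
  refine sum_le_sum fun ω _ => mul_le_mul_of_nonneg_left ?_
    (prod_nonneg fun _ _ => ENNReal.toReal_nonneg)
  split_ifs <;> simp_all

open Classical in
lemma sum_iidProb_eq_iidExpect_card {ι : Type} [Fintype ι] (E : ι → (Fin n → α) → Prop) :
    ∑ f, iidProb P n (E f) = iidExpect P n fun ω => (#{f | E f ω} : ℝ) := by
  simp only [iidProb_eq_iidExpect, natCast_card_filter, iidExpect_sum]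

lemma iidProb_le_sum_le_pmfVar_div {φ : α → ℝ} {m : ℝ} (hm : pmfMean P φ ≤ m) (hn : 0 < n)
    {γ : ℝ} (hγ : 0 < γ) :
    iidProb P n (fun ω => n * (m + γ) ≤ ∑ j, φ (ω j)) ≤ pmfVar P φ / (n * γ ^ 2) := by
  set ψ := fun a => φ a - pmfMean P φ
  have hψ : pmfMean P ψ = 0 := by rw [pmfMean_sub_const, sub_self]
  have hnγ : 0 < (n : ℝ) * γ := by positivity
  calc iidProb P n (fun ω => n * (m + γ) ≤ ∑ j, φ (ω j))
      ≤ iidExpect P n (fun ω => (∑ j, ψ (ω j)) ^ 2 * (((n : ℝ) * γ) ^ 2)⁻¹) := by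
        refine iidProb_le_iidExpect P (fun ω => by positivity) fun ω hω => ?_
        have hsum : ∑ j, ψ (ω j) = ∑ j, φ (ω j) - n * pmfMean P φ := by
          simp [ψ, sum_sub_distrib]
        rw [← div_eq_mul_inv, one_le_div (by positivity)]
        exact pow_le_pow_left₀ hnγ.le
          (by linarith [mul_le_mul_of_nonneg_left hm (Nat.cast_nonneg (α := ℝ) n)]) 2
    _ = pmfVar P φ / (n * γ ^ 2) := by
        rw [iidExpect_mul_const, iidExpect_sum_sq_of_pmfMean_eq_zero P hψ, pmfVar]
        field_simp
        ring

end Iid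

section Counting

lemma card_filter_exp_neg_le_le_exp {β : Type} [Fintype β] {w : β → ℝ} (hw0 : ∀ x, 0 ≤ w x)
    (hw1 : ∑ x, w x ≤ 1) (c : ℝ) : (#{x | exp (-c) ≤ w x} : ℝ) ≤ exp c := by
  have h := (card_nsmul_le_sum {x | exp (-c) ≤ w x} w (exp (-c)) fun x hx =>
    (mem_filter.1 hx).2).trans ((sum_le_univ_sum_of_nonneg hw0).trans hw1)
  rwa [nsmul_eq_mul, ← le_div_iff₀ (exp_pos _), one_div, ← exp_neg, neg_neg] at h

lemma card_filter_apply_eq_apply_mul {V : Type} [Fintype V] [DecidableEq V] (M : ℕ) {u v : V}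
    (huv : u ≠ v) : #{f : V → Fin M | f u = f v} * M = Fintype.card (V → Fin M) := by
  let restrict : {f : V → Fin M // f u = f v} ≃ ({j // j ≠ v} → Fin M) :=
    { toFun := fun f j => f.1 j
      invFun := fun g => ⟨fun j => if h : j = v then g ⟨u, huv⟩ else g ⟨j, h⟩, by simp [huv]⟩
      left_inv := fun f => by
        ext j
        by_cases h : j = v
        · subst h; simp [f.2]
        · simp [h]
      right_inv := fun g => by
        ext j
        simp [j.2] }
  rw [← Fintype.card_subtype, Fintype.card_congr restrict,
    Fintype.card_congr (Equiv.funSplitAt v (Fin M)), Fintype.card_prod, Fintype.card_fin, mul_comm]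

lemma card_filter_exists_collision_mul_le {V : Type} [Fintype V] [DecidableEq V] (M : ℕ)
    (S : Finset V) (v : V) :
    #{f : V → Fin M | ∃ u ∈ S, u ≠ v ∧ f u = f v} * M ≤ #S * Fintype.card (V → Fin M) := by
  have hsub : ({f : V → Fin M | ∃ u ∈ S, u ≠ v ∧ f u = f v} : Finset _)
      ⊆ {u ∈ S | u ≠ v}.biUnion fun u => {f : V → Fin M | f u = f v} := by
    intro f hf
    obtain ⟨u, hu, huv, hfu⟩ := (mem_filter.1 hf).2
    exact mem_biUnion.2 ⟨u, mem_filter.2 ⟨hu, huv⟩, mem_filter.2 ⟨mem_univ f, hfu⟩⟩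
  calc #{f : V → Fin M | ∃ u ∈ S, u ≠ v ∧ f u = f v} * M
      ≤ (∑ u ∈ {u ∈ S | u ≠ v}, #{f : V → Fin M | f u = f v}) * M :=
        Nat.mul_le_mul_right M ((card_le_card hsub).trans card_biUnion_le)
    _ = #{u ∈ S | u ≠ v} * Fintype.card (V → Fin M) := by
        rw [sum_mul, sum_congr rfl fun u hu =>
          card_filter_apply_eq_apply_mul M (mem_filter.1 hu).2, sum_const, smul_eq_mul]
    _ ≤ #S * Fintype.card (V → Fin M) := Nat.mul_le_mul_right _ (card_filter_le S _)

end Counting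

section PMFMap

variable {α β : Type} [Fintype α] (P : PMF α) (g : α → β)

open Classical in
lemma toReal_map_apply (b : β) :
    ((P.map g) b).toReal = ∑ a, if b = g a then (P a).toReal else 0 := by
  rw [PMF.map_apply, tsum_fintype, ENNReal.toReal_sum fun a _ => by
    split_ifs
    exacts [P.apply_ne_top a, ENNReal.zero_ne_top]]
  simp only [apply_ite ENNReal.toReal, ENNReal.toReal_zero]

lemma toReal_apply_le_toReal_map_apply (a : α) : (P a).toReal ≤ ((P.map g) (g a)).toReal := by
  classical
  rw [toReal_map_apply]
  simpa using single_le_sum (f := fun a' => if g a = g a' then (P a').toReal else 0)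
    (fun _ _ => by positivity) (mem_univ a)

lemma sum_toReal_map_apply_mul [Fintype β] (F : β → ℝ) :
    ∑ b, ((P.map g) b).toReal * F b = pmfMean P fun a => F (g a) := by
  classical
  simp only [toReal_map_apply, sum_mul, pmfMean]
  rw [sum_comm]
  refine sum_congr rfl fun a _ => ?_
  simp only [ite_mul, zero_mul, sum_ite_eq', mem_univ, if_true]

lemma pmfEntropy_map [Fintype β] :
    pmfEntropy (P.map g) = pmfMean P fun a => -log ((P.map g) (g a)).toReal := by
  simp only [pmfEntropy, negMulLog, neg_mul, ← mul_neg]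
  exact sum_toReal_map_apply_mul P g fun b => -log ((P.map g) b).toReal

end PMFMap

section SideInformation

variable {𝓧 : Type} [Fintype 𝓧] {K : ℕ} {𝓨 : Fin K → Type} [∀ k, Fintype (𝓨 k)]
  (P : PMF (𝓧 × ∀ k, 𝓨 k)) (k : Fin K)

noncomputable def jointProb (z : 𝓧 × 𝓨 k) : ℝ :=
  ((P.map fun a => (a.1, a.2 k)) z).toReal

noncomputable def sideProb (y : 𝓨 k) : ℝ :=
  ((P.map fun a => a.2 k) y).toReal

/-- The information density `-log P(x | y_k)`; its mean is `H(X | Y_k)` in nats. -/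
noncomputable def infoDensity (a : 𝓧 × ∀ k, 𝓨 k) : ℝ :=
  log (sideProb P k (a.2 k)) - log (jointProb P k (a.1, a.2 k))

/-- `P(X^n = x | Y_k^n = y)`, which is `0` where `y` itself has probability `0`. -/
noncomputable def condProb {n : ℕ} (x : Fin n → 𝓧) (y : Fin n → 𝓨 k) : ℝ :=
  ∏ i, jointProb P k (x i, y i) / sideProb P k (y i)

lemma sum_jointProb (y : 𝓨 k) : ∑ x, jointProb P k (x, y) = sideProb P k y := by
  classical
  simp only [jointProb, sideProb, toReal_map_apply]
  rw [sum_comm]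
  refine sum_congr rfl fun a _ => ?_
  simp [Prod.ext_iff, ite_and]

lemma jointProb_le_sideProb (x : 𝓧) (y : 𝓨 k) : jointProb P k (x, y) ≤ sideProb P k y :=
  sum_jointProb P k y ▸ single_le_sum (f := fun x => jointProb P k (x, y))
    (fun _ _ => ENNReal.toReal_nonneg) (mem_univ x)

lemma jointProb_pos {a : 𝓧 × ∀ k, 𝓨 k} (ha : P a ≠ 0) : 0 < jointProb P k (a.1, a.2 k) :=
  (ENNReal.toReal_pos ha (P.apply_ne_top a)).trans_le
    (toReal_apply_le_toReal_map_apply P (fun a => (a.1, a.2 k)) a)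

lemma pmfMean_infoDensity_nonneg : 0 ≤ pmfMean P (infoDensity P k) :=
  pmfMean_nonneg P fun _ ha => sub_nonneg.2 <|
    log_le_log (jointProb_pos P k ha) (jointProb_le_sideProb P k _ _)

lemma condEntropyQ_eq_pmfMean_div :
    condEntropyQ P k = pmfMean P (infoDensity P k) / log (Fintype.card 𝓧) := by
  simp only [condEntropyQ, pmfEntropy_map, pmfMean, infoDensity, jointProb, sideProb,
    ← sum_sub_distrib]
  congr 1
  refine sum_congr rfl fun a _ => ?_
  ring

lemma condEntropyQ_nonneg : 0 ≤ condEntropyQ P k := by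
  rw [condEntropyQ_eq_pmfMean_div]
  exact div_nonneg (pmfMean_infoDensity_nonneg P k) (log_natCast_nonneg _)

lemma sum_condProb_le_one {n : ℕ} (y : Fin n → 𝓨 k) : ∑ x, condProb P k x y ≤ 1 := by
  classical
  simp only [condProb]
  rw [← Fintype.prod_sum fun i b => jointProb P k (b, y i) / sideProb P k (y i)]
  refine prod_le_one (fun i _ => sum_nonneg fun _ _ => by
    unfold jointProb sideProb; positivity) fun i _ => ?_
  rw [← sum_div, sum_jointProb]
  exact div_self_le_one _

lemma condProb_eq_exp_neg_sum {n : ℕ} {ω : Fin n → 𝓧 × ∀ k, 𝓨 k} (hω : ∀ i, P (ω i) ≠ 0) :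
    condProb P k (fun i => (ω i).1) (fun i => (ω i).2 k)
      = exp (-∑ i, infoDensity P k (ω i)) := by
  rw [← sum_neg_distrib, exp_sum]
  refine prod_congr rfl fun i _ => ?_
  have hxy := jointProb_pos P k (hω i)
  rw [infoDensity, neg_sub, exp_sub, exp_log hxy,
    exp_log (hxy.trans_le (jointProb_le_sideProb P k _ _))]

end SideInformation

section Decoding

variable {𝓧 : Type} [Fintype 𝓧] {K : ℕ} {𝓨 : Fin K → Type} (P : PMF (𝓧 × ∀ k, 𝓨 k))

noncomputable def typicalSet (k : Fin K) (c : ℝ) {n : ℕ} (y : Fin n → 𝓨 k) :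
    Finset (Fin n → 𝓧) :=
  {x | exp (-c) ≤ condProb P k x y}

noncomputable def typicalDecoder [Nonempty 𝓧] {n M : ℕ} (f : (Fin n → 𝓧) → Fin M) (c : ℝ)
    (k : Fin K) (z : Fin M × (Fin n → 𝓨 k)) : Fin n → 𝓧 :=
  Classical.epsilon fun x => x ∈ typicalSet P k c z.2 ∧ f x = z.1

def BinCollision {n M : ℕ} (f : (Fin n → 𝓧) → Fin M) (k : Fin K) (c : ℝ) (x : Fin n → 𝓧)
    (y : Fin n → 𝓨 k) : Prop :=
  ∃ x' ∈ typicalSet P k c y, x' ≠ x ∧ f x' = f x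

lemma notMem_typicalSet_or_binCollision_of_ne_typicalDecoder [Nonempty 𝓧] {n M : ℕ}
    {f : (Fin n → 𝓧) → Fin M} {c : ℝ} {k : Fin K} {x : Fin n → 𝓧} {y : Fin n → 𝓨 k}
    (h : x ≠ typicalDecoder P f c k (f x, y)) :
    x ∉ typicalSet P k c y ∨ BinCollision P f k c x y := by
  refine or_iff_not_imp_left.2 fun hx => ?_
  obtain ⟨hmem, hbin⟩ := Classical.epsilon_spec
    (p := fun x' => x' ∈ typicalSet P k c y ∧ f x' = f x) ⟨x, not_not.1 hx, rfl⟩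
  exact ⟨_, hmem, Ne.symm h, hbin⟩

end Decoding

section Binning

variable {𝓧 : Type} [Fintype 𝓧] {K : ℕ} {𝓨 : Fin K → Type} [∀ k, Fintype (𝓨 k)]
  (P : PMF (𝓧 × ∀ k, 𝓨 k))

lemma card_typicalSet_le (k : Fin K) (c : ℝ) {n : ℕ} (y : Fin n → 𝓨 k) :
    (#(typicalSet P k c y) : ℝ) ≤ exp c :=
  card_filter_exp_neg_le_le_exp (fun _ => prod_nonneg fun _ _ => by
    unfold jointProb sideProb; positivity) (sum_condProb_le_one P k y) c

lemma lt_sum_infoDensity_of_notMem_typicalSet {k : Fin K} {c : ℝ} {n : ℕ}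
    {ω : Fin n → 𝓧 × ∀ k, 𝓨 k} (hω : ∀ i, P (ω i) ≠ 0)
    (h : (fun i => (ω i).1) ∉ typicalSet P k c (fun i => (ω i).2 k)) :
    c < ∑ i, infoDensity P k (ω i) := by
  simpa [typicalSet, condProb_eq_exp_neg_sum P k hω] using h

open Classical in
lemma card_binCollision_le (k : Fin K) (c : ℝ) {n M : ℕ} (hM : 0 < M) (x : Fin n → 𝓧)
    (y : Fin n → 𝓨 k) :
    (#{f : (Fin n → 𝓧) → Fin M | BinCollision P f k c x y} : ℝ)
      ≤ exp c * Fintype.card ((Fin n → 𝓧) → Fin M) / M := by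
  have h : #{f : (Fin n → 𝓧) → Fin M | BinCollision P f k c x y} * M
      ≤ #(typicalSet P k c y) * Fintype.card ((Fin n → 𝓧) → Fin M) := by
    convert card_filter_exists_collision_mul_le M (typicalSet P k c y) x
    rfl
  rw [le_div_iff₀ (by exact_mod_cast hM)]
  calc _ ≤ (#(typicalSet P k c y) : ℝ) * Fintype.card ((Fin n → 𝓧) → Fin M) := by
        exact_mod_cast h
    _ ≤ _ := mul_le_mul_of_nonneg_right (card_typicalSet_le P k c y) (Nat.cast_nonneg _)

lemma exists_binning (n : ℕ) {M : ℕ} (hM : 0 < M) (c : ℝ) :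
    ∃ f : (Fin n → 𝓧) → Fin M, ∑ k, iidProb P n (fun ω =>
      BinCollision P f k c (fun i => (ω i).1) (fun i => (ω i).2 k)) ≤ K * exp c / M := by
  classical
  have : Nonempty (Fin M) := ⟨⟨0, hM⟩⟩
  set N := (Fintype.card ((Fin n → 𝓧) → Fin M) : ℝ)
  have havg : ∑ f : (Fin n → 𝓧) → Fin M, ∑ k, iidProb P n (fun ω =>
      BinCollision P f k c (fun i => (ω i).1) (fun i => (ω i).2 k))
        ≤ ∑ _f : (Fin n → 𝓧) → Fin M, K * exp c / M := by
    rw [sum_comm, sum_const, card_univ, nsmul_eq_mul]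
    calc _ ≤ ∑ _k : Fin K, exp c * N / M := by
          refine sum_le_sum fun k _ => ?_
          rw [sum_iidProb_eq_iidExpect_card, ← iidExpect_const (n := n) P (exp c * N / M)]
          exact iidExpect_mono_of_support P fun ω _ => card_binCollision_le P k c hM _ _
      _ = N * (K * exp c / M) := by
          rw [sum_const, card_univ, Fintype.card_fin, nsmul_eq_mul]
          ring
  obtain ⟨f, -, hf⟩ := exists_le_of_sum_le univ_nonempty havg
  exact ⟨f, hf⟩

theorem exists_code [Nonempty 𝓧] (n : ℕ) {M : ℕ} (hM : 0 < M) (c : ℝ) :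
    ∃ f : (Fin n → 𝓧) → Fin M, ∀ k,
      iidProb P n (fun ω => (fun i => (ω i).1)
          ≠ typicalDecoder P f c k (f (fun i => (ω i).1), fun i => (ω i).2 k))
        ≤ iidProb P n (fun ω => c < ∑ i, infoDensity P k (ω i)) + K * exp c / M := by
  obtain ⟨f, hf⟩ := exists_binning P n hM c
  refine ⟨f, fun k => ?_⟩
  calc _ ≤ iidProb P n (fun ω => c < ∑ i, infoDensity P k (ω i) ∨
          BinCollision P f k c (fun i => (ω i).1) (fun i => (ω i).2 k)) :=
        iidProb_mono_of_support P fun ω hω herr =>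
          (notMem_typicalSet_or_binCollision_of_ne_typicalDecoder P herr).imp_left
            (lt_sum_infoDensity_of_notMem_typicalSet P hω)
    _ ≤ _ := (iidProb_or_le P _ _).trans <| add_le_add_right
        ((single_le_sum (fun j _ => iidProb_nonneg P _) (mem_univ k)).trans hf) _

theorem exists_code_error_le [Nonempty 𝓧] {n M : ℕ} (hn : 0 < n) {h γ : ℝ} (hγ : 0 < γ)
    (hmean : ∀ k, pmfMean P (infoDensity P k) ≤ h) (hM : exp (n * (h + 2 * γ)) ≤ M) :
    ∃ f : (Fin n → 𝓧) → Fin M, ∀ k,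
      iidProb P n (fun ω => (fun i => (ω i).1)
          ≠ typicalDecoder P f (n * (h + γ)) k (f (fun i => (ω i).1), fun i => (ω i).2 k))
        ≤ (∑ j, pmfVar P (infoDensity P j)) / (n * γ ^ 2) + K * exp (-(n * γ)) := by
  obtain ⟨f, hf⟩ := exists_code P n (Nat.cast_pos.mp ((exp_pos _).trans_le hM)) (n * (h + γ))
  refine ⟨f, fun k => (hf k).trans (add_le_add ?_ ?_)⟩
  · calc _ ≤ iidProb P n (fun ω => n * (h + γ) ≤ ∑ i, infoDensity P k (ω i)) :=
          iidProb_mono_of_support P fun _ _ => le_of_lt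
      _ ≤ pmfVar P (infoDensity P k) / (n * γ ^ 2) :=
          iidProb_le_sum_le_pmfVar_div P (hmean k) hn hγ
      _ ≤ (∑ j, pmfVar P (infoDensity P j)) / (n * γ ^ 2) := by
          gcongr
          exact single_le_sum (fun j _ => pmfVar_nonneg P _) (mem_univ k)
  · calc K * exp (n * (h + γ)) / M ≤ K * exp (n * (h + γ)) / exp (n * (h + 2 * γ)) :=
          div_le_div_of_nonneg_left (by positivity) (exp_pos _) hM
      _ = K * exp (-(n * γ)) := by
          rw [mul_div_assoc, ← exp_sub]
          congr 2
          ring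

end Binning

section Rate

lemma log_natCeil_exp_mem {a : ℝ} (ha : 0 ≤ a) :
    a ≤ log ⌈exp a⌉₊ ∧ log ⌈exp a⌉₊ < a + log 2 := by
  have hM : (0 : ℝ) < ⌈exp a⌉₊ := by exact_mod_cast Nat.ceil_pos.2 (exp_pos a)
  constructor
  · simpa using log_le_log (exp_pos a) (Nat.le_ceil (exp a))
  · calc log ⌈exp a⌉₊ < log (2 * exp a) := log_lt_log hM <|
          (Nat.ceil_lt_add_one (exp_pos a).le).trans_le (by linarith [one_le_exp ha])
      _ = a + log 2 := by rw [log_mul two_ne_zero (exp_pos a).ne', log_exp, add_comm]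

lemma log_natCeil_exp_div_mem_Ioo {L H δ : ℝ} {n : ℕ} (hL : 0 < L) (hH : 0 ≤ H) (hδ : 0 < δ)
    (hn : 0 < n) (h2 : log 2 < n * L * δ / 2) :
    log ⌈exp (n * L * (H + δ / 2))⌉₊ / (n * L) ∈ Set.Ioo H (H + δ) := by
  have hnL : 0 < n * L := by positivity
  obtain ⟨hlo, hhi⟩ := log_natCeil_exp_mem (a := n * L * (H + δ / 2)) (by positivity)
  constructor
  · rw [lt_div_iff₀ hnL]
    nlinarith
  · rw [div_lt_iff₀ hnL]
    nlinarith

variable {𝓧 : Type} [Fintype 𝓧] {K : ℕ} {𝓨 : Fin K → Type} [∀ k, Fintype (𝓨 k)]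
  (P : PMF (𝓧 × ∀ k, 𝓨 k))

theorem eventually_exists_code [Nontrivial 𝓧] {H ε δ : ℝ} (hH0 : 0 ≤ H)
    (hH : ∀ k, condEntropyQ P k ≤ H) (hε : 0 < ε) (hδ : 0 < δ) :
    ∀ᶠ n in atTop, ∃ (M : ℕ) (f : (Fin n → 𝓧) → Fin M)
        (g : ∀ k : Fin K, Fin M × (Fin n → 𝓨 k) → (Fin n → 𝓧)),
      0 < M ∧ H < log M / (n * log (Fintype.card 𝓧)) ∧
        log M / (n * log (Fintype.card 𝓧)) < H + δ ∧
        ∀ k, iidProb P n (fun ω => (fun i => (ω i).1)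
          ≠ g k (f (fun i => (ω i).1), fun i => (ω i).2 k)) < ε := by
  set L := log (Fintype.card 𝓧)
  have hL : 0 < L := log_pos (by exact_mod_cast Fintype.one_lt_card)
  set γ := L * δ / 4
  have hγ : 0 < γ := by positivity
  have hmean : ∀ k, pmfMean P (infoDensity P k) ≤ L * H := fun k => by
    have := hH k
    rwa [condEntropyQ_eq_pmfMean_div, div_le_iff₀ hL, mul_comm] at this
  have hlin : Tendsto (fun n : ℕ => (n : ℝ) * γ) atTop atTop :=
    tendsto_natCast_atTop_atTop.atTop_mul_const hγ
  have hsmall : Tendsto (fun n : ℕ => (∑ k, pmfVar P (infoDensity P k)) / (n * γ ^ 2)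
      + K * exp (-(n * γ))) atTop (𝓝 0) := by
    simpa using (tendsto_const_nhds.div_atTop
      (tendsto_natCast_atTop_atTop.atTop_mul_const (pow_pos hγ 2))).add
      ((tendsto_exp_neg_atTop_nhds_zero.comp hlin).const_mul (K : ℝ))
  filter_upwards [eventually_gt_atTop 0, hlin.eventually_gt_atTop (log 2),
    hsmall.eventually_lt_const hε] with n hn hlog2 herr
  -- `a` is the target value of `log M`, halfway between `n L H` and `n L (H + δ)`.
  set a := n * L * (H + δ / 2)
  have hMexp : exp (n * (L * H + 2 * γ)) ≤ ⌈exp a⌉₊ := by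
    rw [show n * (L * H + 2 * γ) = a by simp only [a, γ]; ring]
    exact Nat.le_ceil _
  have hlog2' : log 2 < n * L * δ / 2 := by
    have : (0 : ℝ) < n * γ := by positivity
    linarith [show n * L * δ / 2 = 2 * (n * γ) by simp only [γ]; ring]
  obtain ⟨hlo, hhi⟩ := log_natCeil_exp_div_mem_Ioo hL hH0 hδ hn hlog2'
  obtain ⟨f, hf⟩ := exists_code_error_le P hn hγ hmean hMexp
  exact ⟨_, f, _, Nat.cast_pos.mp ((exp_pos _).trans_le hMexp), hlo, hhi,
    fun k => (hf k).trans_lt herr⟩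

end Rate

end SourceCoding

theorem universal_source_coding_with_side_information
    {𝓧 : Type} [Field 𝓧] [Fintype 𝓧] {K : ℕ} (hK : 0 < K)
    {𝓨 : Fin K → Type} [∀ k, Fintype (𝓨 k)]
    (P : PMF (𝓧 × ∀ k, 𝓨 k)) {ε δ : ℝ} (hε : 0 < ε) (hδ : 0 < δ) :
    ∃ t m₀ : ℕ, 0 < t ∧ 0 < m₀ ∧ ∀ m : ℕ, m₀ ≤ m →
      ∃ (M : ℕ) (f : (Fin (t * 2 ^ m) → 𝓧) → Fin M)
        (g : ∀ k : Fin K, Fin M × (Fin (t * 2 ^ m) → 𝓨 k) → (Fin (t * 2 ^ m) → 𝓧)),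
        0 < M ∧
        Finset.univ.sup' (Finset.univ_nonempty_iff.mpr ⟨⟨0, hK⟩⟩)
            (fun k => condEntropyQ P k)
          < Real.log M / ((t * 2 ^ m : ℕ) * Real.log (Fintype.card 𝓧)) ∧
        Real.log M / ((t * 2 ^ m : ℕ) * Real.log (Fintype.card 𝓧))
          < Finset.univ.sup' (Finset.univ_nonempty_iff.mpr ⟨⟨0, hK⟩⟩)
              (fun k => condEntropyQ P k) + δ ∧
        ∀ k : Fin K,
          iidProb P (t * 2 ^ m)
            (fun ω => (fun i => (ω i).1)
              ≠ g k (f (fun i => (ω i).1), fun i => (ω i).2 k)) < ε := by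
  have hle : ∀ k, condEntropyQ P k ≤ Finset.univ.sup'
      (Finset.univ_nonempty_iff.mpr ⟨⟨0, hK⟩⟩) (fun k => condEntropyQ P k) :=
    fun k => Finset.le_sup' (fun k => condEntropyQ P k) (Finset.mem_univ k)
  have hcode := SourceCoding.eventually_exists_code P
    ((SourceCoding.condEntropyQ_nonneg P ⟨0, hK⟩).trans (hle _)) hle hε hδ
  have hpow : Filter.Tendsto (fun m : ℕ => 1 * 2 ^ m) Filter.atTop Filter.atTop := by
    simpa using tendsto_pow_atTop_atTop_of_one_lt one_lt_two
  obtain ⟨m₀, hm₀⟩ := Filter.eventually_atTop.1 (hpow.eventually hcode)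
  exact ⟨1, m₀ + 1, one_pos, m₀.succ_pos, fun m hm => hm₀ m (by omega)⟩
end

section
/- Let 𝒳 be a finite field with q elements and let P₁,…,P_K be probability distributions on 𝒳. For every ε>0 and δ>0 there exist positive integers t and m₀ such that for every m ≥ m₀, setting n = t·2^m, there exist a positive integer M with (log M)/(n·log q) < max_{1≤k≤K} H_q(P_k) + δ, an encoder f : 𝒳ⁿ → Fin M, and decoders g_k : Fin M → 𝒳ⁿ for 1 ≤ k ≤ K, such that for every k, if X^{1:n} is distributed according to the n-fold product P_k^{⊗n}, then Pr[X^{1:n} ≠ g_k(f(X^{1:n}))] < ε. -/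
/-!
Typical-set coding with one codebook for all sources. Let `H` bound the entropies and fix
`c > 0`. Keep every block that has likelihood at least `exp (-n (H + c))` under some `P k`: there
are at most `K exp (n (H + c))` of them, so indexing them costs rate `H + c + o(1)`. A block
outside the codebook has `P k`-likelihood below `exp (-n (H_k + c))`, i.e. its empirical log-loss
exceeds the entropy of `P k` by `c`, and by Chebyshev's inequality this has probability at most
`Var / (n c²)`. Any block length works, so `t = 1`.
-/

open scoped BigOperators

open Finset Real Filter

section ProductWeights

variable {ι α : Type*} [Fintype ι] [DecidableEq ι] [Fintype α] {p : α → ℝ}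

theorem sum_prod_apply_eq_one (hp : ∑ x, p x = 1) : ∑ ω : ι → α, ∏ l, p (ω l) = 1 := by
  simp [← Fintype.prod_sum, hp]

theorem sum_prod_mul_apply_mul_apply (hp : ∑ x, p x = 1) (ψ : α → ℝ) (i j : ι) :
    ∑ ω : ι → α, (∏ l, p (ω l)) * (ψ (ω i) * ψ (ω j)) =
      if i = j then ∑ x, p x * ψ x ^ 2 else (∑ x, p x * ψ x) ^ 2 := by
  let F : ι → α → ℝ := fun l x => p x * (if l = i then ψ x else 1) * (if l = j then ψ x else 1)
  have hF (ω : ι → α) : (∏ l, p (ω l)) * (ψ (ω i) * ψ (ω j)) = ∏ l, F l (ω l) := by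
    simp only [F, prod_mul_distrib, prod_ite_eq', mem_univ, if_true]; ring
  rw [sum_congr rfl fun ω _ => hF ω, ← Fintype.prod_sum]
  split_ifs with hij
  · subst hij
    rw [Fintype.prod_eq_single i fun l hl => by simp [F, hl, hp]]
    simp only [F, if_true, sq, mul_assoc]
  · have hF_sum (l : ι) : ∑ x, F l x =
        (if l = i then ∑ x, p x * ψ x else 1) * (if l = j then ∑ x, p x * ψ x else 1) := by
      by_cases hi : l = i <;> by_cases hj : l = j
      · exact absurd (hi ▸ hj) hij
      · subst hi; simp [F, hij]
      · subst hj; simp [F, Ne.symm hij]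
      · simp [F, hi, hj, hp]
    rw [Fintype.prod_congr _ _ hF_sum, prod_mul_distrib, prod_ite_eq', prod_ite_eq']
    simp [sq]

theorem sum_prod_mul_sum_sq (hp : ∑ x, p x = 1) {ψ : α → ℝ} (hψ : ∑ x, p x * ψ x = 0) :
    ∑ ω : ι → α, (∏ l, p (ω l)) * (∑ i, ψ (ω i)) ^ 2 = Fintype.card ι * ∑ x, p x * ψ x ^ 2 := by
  simp_rw [sq (∑ i, _), sum_mul_sum, mul_sum]
  rw [sum_comm]
  simp_rw [sum_comm (s := univ (α := ι → α)), sum_prod_mul_apply_mul_apply hp, hψ]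
  simp [mul_sum]

theorem sum_filter_prod_le_variance_div [Nonempty ι] (hp0 : ∀ x, 0 ≤ p x)
    (hp1 : ∑ x, p x = 1) (φ : α → ℝ) {c : ℝ} (hc : 0 < c) :
    ∑ ω : ι → α with Fintype.card ι * (∑ x, p x * φ x + c) < ∑ i, φ (ω i), ∏ l, p (ω l)
      ≤ (∑ x, p x * (φ x - ∑ y, p y * φ y) ^ 2) / (Fintype.card ι * c ^ 2) := by
  set μ := ∑ y, p y * φ y
  set n : ℝ := (Fintype.card ι : ℝ)
  have hn : 0 < n := by simp [n, Fintype.card_pos]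
  have hψ : ∑ x, p x * (φ x - μ) = 0 := by simp [mul_sub, sum_sub_distrib, ← sum_mul, hp1, μ]
  have hw (ω : ι → α) : 0 ≤ ∏ l, p (ω l) := prod_nonneg fun l _ => hp0 _
  have hmarkov (ω : ι → α) (hω : n * (μ + c) < ∑ i, φ (ω i)) :
      ∏ l, p (ω l) ≤ (∏ l, p (ω l)) * (∑ i, (φ (ω i) - μ)) ^ 2 / (n * c) ^ 2 := by
    have hdev : n * c < ∑ i, (φ (ω i) - μ) := by
      rw [sum_sub_distrib, sum_const, card_univ, nsmul_eq_mul]; linarith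
    rw [le_div_iff₀ (by positivity)]
    exact mul_le_mul_of_nonneg_left (pow_le_pow_left₀ (by positivity) hdev.le 2) (hw ω)
  calc ∑ ω : ι → α with n * (μ + c) < ∑ i, φ (ω i), ∏ l, p (ω l)
      ≤ ∑ ω : ι → α with n * (μ + c) < ∑ i, φ (ω i),
          (∏ l, p (ω l)) * (∑ i, (φ (ω i) - μ)) ^ 2 / (n * c) ^ 2 :=
        sum_le_sum fun ω hω => hmarkov ω (mem_filter.mp hω).2
    _ ≤ ∑ ω : ι → α, (∏ l, p (ω l)) * (∑ i, (φ (ω i) - μ)) ^ 2 / (n * c) ^ 2 :=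
        sum_le_sum_of_subset_of_nonneg (filter_subset _ _) fun ω _ _ => by
          have := hw ω; positivity
    _ = (∑ x, p x * (φ x - μ) ^ 2) / (n * c ^ 2) := by
        rw [← sum_div, sum_prod_mul_sum_sq hp1 hψ]
        field_simp
        ring

theorem card_filter_le_prod_le_inv (hp0 : ∀ x, 0 ≤ p x) (hp1 : ∑ x, p x = 1) {b : ℝ}
    (hb : 0 < b) : (#{ω : ι → α | b ≤ ∏ l, p (ω l)} : ℝ) ≤ b⁻¹ := by
  rw [inv_eq_one_div, le_div_iff₀ hb, ← nsmul_eq_mul, ← sum_prod_apply_eq_one (ι := ι) hp1]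
  calc #{ω : ι → α | b ≤ ∏ l, p (ω l)} • b
      ≤ ∑ ω : ι → α with b ≤ ∏ l, p (ω l), ∏ l, p (ω l) :=
        card_nsmul_le_sum _ _ _ fun ω hω => (mem_filter.mp hω).2
    _ ≤ ∑ ω : ι → α, ∏ l, p (ω l) :=
        sum_le_sum_of_subset_of_nonneg (filter_subset _ _) fun ω _ _ =>
          prod_nonneg fun l _ => hp0 _

end ProductWeights

theorem lt_sum_neg_log_of_prod_lt_exp {ι : Type*} {s : Finset ι} {x : ι → ℝ} {τ : ℝ}
    (hpos : 0 < ∏ i ∈ s, x i) (hlt : ∏ i ∈ s, x i < exp (-τ)) : τ < ∑ i ∈ s, -log (x i) := by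
  have hlog := log_lt_log hpos hlt
  rw [log_exp, log_prod fun i hi => (prod_ne_zero_iff.mp hpos.ne' i hi)] at hlog
  rw [sum_neg_distrib]
  linarith

noncomputable def varentropy {α : Type*} [Fintype α] (p : α → ℝ) : ℝ :=
  ∑ x, p x * (-log (p x) - ∑ y, negMulLog (p y)) ^ 2

theorem sum_filter_prod_lt_exp_entropy_le {ι α : Type*} [Fintype ι] [DecidableEq ι] [Nonempty ι]
    [Fintype α] {p : α → ℝ} (hp0 : ∀ x, 0 ≤ p x) (hp1 : ∑ x, p x = 1) {c : ℝ} (hc : 0 < c) :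
    ∑ ω : ι → α with ∏ l, p (ω l) < exp (-(Fintype.card ι * (∑ x, negMulLog (p x) + c))),
        ∏ l, p (ω l)
      ≤ varentropy p / (Fintype.card ι * c ^ 2) := by
  have hmean : ∑ x, p x * -log (p x) = ∑ x, negMulLog (p x) :=
    sum_congr rfl fun x _ => by rw [negMulLog]; ring
  have hcheb := sum_filter_prod_le_variance_div (ι := ι) hp0 hp1 (fun x => -log (p x)) hc
  rw [hmean] at hcheb
  refine le_trans ?_ hcheb
  rw [sum_filter, sum_filter]
  refine sum_le_sum fun ω _ => ?_
  have hw : 0 ≤ ∏ l, p (ω l) := prod_nonneg fun l _ => hp0 _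
  split_ifs with hlt hdev hdev
  · exact le_rfl
  -- `log 0 = 0`, so a block of probability zero may escape the deviation event: it weighs nothing.
  · rcases hw.lt_or_eq with hpos | hzero
    · exact absurd (lt_sum_neg_log_of_prod_lt_exp hpos hlt) hdev
    · exact hzero.symm.le
  · exact hw
  · exact le_rfl

theorem Finset.exists_leftInvOn_fin {β : Type*} [Nonempty β] (T : Finset β) :
    ∃ (f : β → Fin (#T + 1)) (g : Fin (#T + 1) → β), Set.LeftInvOn g f T := by
  classical
  let f : β → Fin (#T + 1) := fun ω =>
    if h : ω ∈ T then (T.equivFin ⟨ω, h⟩).castSucc else Fin.last _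
  refine ⟨f, Function.invFunOn f T, Set.InjOn.leftInvOn_invFunOn fun a ha b hb hab => ?_⟩
  simpa [f, mem_coe.mp ha, mem_coe.mp hb] using hab

theorem exists_universal_code {ι α κ : Type*} [Fintype ι] [DecidableEq ι] [Nonempty ι]
    [Fintype α] [DecidableEq α] [Nonempty α] [Fintype κ] (p : κ → α → ℝ) (hp0 : ∀ k x, 0 ≤ p k x)
    (hp1 : ∀ k, ∑ x, p k x = 1) {H c : ℝ} (hH : ∀ k, ∑ x, negMulLog (p k x) ≤ H) (hc : 0 < c) :
    ∃ (M : ℕ) (f : (ι → α) → Fin M) (g : Fin M → ι → α), 0 < M ∧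
      (M : ℝ) ≤ Fintype.card κ * exp (Fintype.card ι * (H + c)) + 1 ∧
      ∀ k, ∑ ω with ω ≠ g (f ω), ∏ l, p k (ω l) ≤ varentropy (p k) / (Fintype.card ι * c ^ 2) := by
  set b := exp (-(Fintype.card ι * (H + c)))
  set T := univ.biUnion fun k => ({ω : ι → α | b ≤ ∏ l, p k (ω l)} : Finset _)
  obtain ⟨f, g, hgf⟩ := T.exists_leftInvOn_fin
  refine ⟨#T + 1, f, g, (#T).succ_pos, ?_, fun k => ?_⟩
  · have hcard : (#T : ℝ) ≤ Fintype.card κ * b⁻¹ :=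
      calc (#T : ℝ) ≤ ∑ k, (#{ω : ι → α | b ≤ ∏ l, p k (ω l)} : ℝ) := mod_cast card_biUnion_le
        _ ≤ ∑ _k : κ, b⁻¹ :=
          sum_le_sum fun k _ => card_filter_le_prod_le_inv (hp0 k) (hp1 k) (exp_pos _)
        _ = Fintype.card κ * b⁻¹ := by simp
    rw [← exp_neg, neg_neg] at hcard
    push_cast
    linarith
  · refine le_trans (sum_le_sum_of_subset_of_nonneg (fun ω hω => ?_) fun ω _ _ =>
      prod_nonneg fun l _ => hp0 k _) (sum_filter_prod_lt_exp_entropy_le (hp0 k) (hp1 k) hc)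
    have hωT : ω ∉ T := fun h => (mem_filter.mp hω).2 (hgf (mem_coe.mpr h)).symm
    simp only [T, mem_biUnion, mem_filter, mem_univ, true_and, not_exists, not_le] at hωT
    refine mem_filter.mpr ⟨mem_univ _, (hωT k).trans_le (exp_le_exp.mpr ?_)⟩
    gcongr
    exact hH k

theorem PMF.sum_toReal_eq_one {α : Type*} [Fintype α] (Q : PMF α) : ∑ x, (Q x).toReal = 1 := by
  rw [← ENNReal.toReal_sum fun x _ => Q.apply_ne_top x, ← ENNReal.toReal_one, ← Q.tsum_coe,
    tsum_fintype]

theorem pmfEntropy_nonneg {α : Type} [Fintype α] (Q : PMF α) : 0 ≤ pmfEntropy Q :=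
  sum_nonneg fun x _ => negMulLog_nonneg ENNReal.toReal_nonneg
    (ENNReal.toReal_le_of_le_ofReal zero_le_one (by simpa using Q.coe_le_one x))

theorem iidProb_eq_sum_filter {α : Type} [Fintype α] (P : PMF α) (n : ℕ)
    (E : (Fin n → α) → Prop) [DecidablePred E] :
    iidProb P n E = ∑ ω with E ω, ∏ i, (P (ω i)).toReal := by
  rw [iidProb, sum_filter]
  congr!

theorem eventually_exists_code_rate_lt {α κ : Type} [Fintype α] [DecidableEq α] [Nonempty α]
    [Fintype κ] [Nonempty κ] (P : κ → PMF α) {L R ε δ : ℝ} (hL : 0 < L)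
    (hR : ∀ k, pmfEntropy (P k) / L ≤ R) (hε : 0 < ε) (hδ : 0 < δ) :
    ∀ᶠ n in atTop, ∃ (M : ℕ) (f : (Fin n → α) → Fin M) (g : κ → Fin M → Fin n → α), 0 < M ∧
      log M / (n * L) < R + δ ∧ ∀ k, iidProb (P k) n (fun ω => ω ≠ g k (f ω)) < ε := by
  set p : κ → α → ℝ := fun k x => (P k x).toReal
  set c := δ * L / 2
  have hc : 0 < c := by positivity
  have hR0 : 0 ≤ R := (div_nonneg (pmfEntropy_nonneg _) hL.le).trans (hR (Classical.arbitrary κ))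
  have hH (k : κ) : ∑ x, negMulLog (p k x) ≤ R * L := (div_le_iff₀ hL).mp (hR k)
  have hrate : ∀ᶠ n : ℕ in atTop, log (Fintype.card κ + 1) / L / n < δ / 2 :=
    (tendsto_const_div_atTop_nhds_zero_nat _).eventually_lt_const (by positivity)
  have herr : ∀ᶠ n : ℕ in atTop, ∀ k, varentropy (p k) / c ^ 2 / n < ε :=
    eventually_all.mpr fun k => (tendsto_const_div_atTop_nhds_zero_nat _).eventually_lt_const hε
  filter_upwards [hrate, herr, eventually_gt_atTop 0] with n hrate herr hn
  have : Nonempty (Fin n) := ⟨⟨0, hn⟩⟩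
  obtain ⟨M, f, g, hM, hMle, hgf⟩ := exists_universal_code (ι := Fin n) p
    (fun _ _ => ENNReal.toReal_nonneg) (fun k => (P k).sum_toReal_eq_one) hH hc
  refine ⟨M, f, fun _ => g, hM, ?_, fun k => ?_⟩
  · rw [Fintype.card_fin] at hMle
    have hexp : 1 ≤ exp (n * (R * L + c)) := one_le_exp (by positivity)
    have hlog : log M ≤ log (Fintype.card κ + 1) + n * (R * L + c) :=
      calc log M ≤ log ((Fintype.card κ + 1) * exp (n * (R * L + c))) :=
            log_le_log (by positivity) (by linarith)
        _ = _ := by rw [log_mul (by positivity) (exp_pos _).ne', log_exp]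
    rw [div_div, div_lt_iff₀ (by positivity)] at hrate
    have hc_eq : (n : ℝ) * c = δ / 2 * (L * n) := by ring
    rw [div_lt_iff₀ (by positivity)]
    linarith
  · rw [iidProb_eq_sum_filter]
    refine (hgf k).trans_lt ?_
    simpa [div_div, mul_comm] using herr k

theorem universal_compression_without_side_information
    {𝓧 : Type} [Field 𝓧] [Fintype 𝓧] {K : ℕ} (hK : 0 < K)
    (P : Fin K → PMF 𝓧) {ε δ : ℝ} (hε : 0 < ε) (hδ : 0 < δ) :
    ∃ t m₀ : ℕ, 0 < t ∧ 0 < m₀ ∧ ∀ m : ℕ, m₀ ≤ m →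
      ∃ (M : ℕ) (f : (Fin (t * 2 ^ m) → 𝓧) → Fin M)
        (g : Fin K → Fin M → (Fin (t * 2 ^ m) → 𝓧)),
        0 < M ∧
        Real.log M / ((t * 2 ^ m : ℕ) * Real.log (Fintype.card 𝓧))
          < Finset.univ.sup' (Finset.univ_nonempty_iff.mpr ⟨⟨0, hK⟩⟩)
              (fun k => pmfEntropy (P k) / Real.log (Fintype.card 𝓧)) + δ ∧
        ∀ k : Fin K, iidProb (P k) (t * 2 ^ m) (fun ω => ω ≠ g k (f ω)) < ε := by
  classical
  have : Nonempty (Fin K) := ⟨⟨0, hK⟩⟩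
  have hq : 0 < log (Fintype.card 𝓧) := log_pos (mod_cast Fintype.one_lt_card)
  have hR (k : Fin K) : pmfEntropy (P k) / log (Fintype.card 𝓧) ≤
      univ.sup' univ_nonempty fun k => pmfEntropy (P k) / log (Fintype.card 𝓧) :=
    le_sup' (fun k => pmfEntropy (P k) / log (Fintype.card 𝓧)) (mem_univ k)
  obtain ⟨N, hN⟩ := eventually_atTop.mp (eventually_exists_code_rate_lt P hq hR hε hδ)
  refine ⟨1, N + 1, one_pos, N.succ_pos, fun m hm => hN _ ?_⟩
  calc N ≤ m := by omega
    _ ≤ 1 * 2 ^ m := by rw [one_mul]; exact m.lt_two_pow_self.le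
end
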